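/- arXiv:1808.01380 — 3 statements merged into one kernel-verified Lean document; each statement's English description precedes it below -/
import Mathlib

section
/- For a matrix A ∈ M_{n-1}(ℝ) with nonzero symmetric part, F(A) = n if and only if S(A) = aI for some nonzero a ∈ ℝ. -/
open Matrix

/-- Symmetric part `S(A) = (A + Aᵀ)/2`. -/
noncomputable def Ssym {m : ℕ} (A : Matrix (Fin m) (Fin m) ℝ) : Matrix (Fin m) (Fin m) ℝ :=
  (1 / 2 : ℝ) • (A + Aᵀ)

/-- Commutator of matrices. -/
def brk {m : ℕ} (X Y : Matrix (Fin m) (Fin m) ℝ) : Matrix (Fin m) (Fin m) ℝ :=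
  X * Y - Y * X

/-- Squared norm `|X|² = tr (X Xᵀ)`. -/
noncomputable def nsq {m : ℕ} (X : Matrix (Fin m) (Fin m) ℝ) : ℝ :=
  (X * Xᵀ).trace

/-- The Ricci pinching functional of the almost-abelian solvmanifold attached to `A`:
`F(A) = (tr S(A)² + (tr A)²)² / (tr S(A)² (tr S(A)² + (tr A)²) + ¼|[A,Aᵀ]|²)`. -/
noncomputable def Fpinch {m : ℕ} (A : Matrix (Fin m) (Fin m) ℝ) : ℝ :=
  ((Ssym A * Ssym A).trace + A.trace ^ 2) ^ 2 /
    ((Ssym A * Ssym A).trace * ((Ssym A * Ssym A).trace + A.trace ^ 2)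
      + (1 / 4) * nsq (brk A Aᵀ))

lemma trace_mul_transpose_eq_sum {m : ℕ} (X : Matrix (Fin m) (Fin m) ℝ) :
    (X * Xᵀ).trace = ∑ i, ∑ j, (X i j)^2 := by
  simp [Matrix.trace, Matrix.mul_apply, Matrix.diag, sq]

lemma sum_sq_ident {m : ℕ} (f : Fin m → ℝ) :
    (m : ℝ) * ∑ i, f i ^ 2 - (∑ i, f i)^2 = (1/2) * ∑ i, ∑ j, (f i - f j)^2 := by
  have h : ∑ i : Fin m, ∑ j : Fin m, f i * f j = (∑ i, f i)^2 := by
    rw [sq, Finset.sum_mul_sum]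
  simp only [sub_sq, Finset.sum_add_distrib, Finset.sum_sub_distrib, Finset.sum_const,
    Finset.card_univ, Fintype.card_fin, nsmul_eq_mul]
  have h2 : ∑ i : Fin m, ∑ j : Fin m, 2 * f i * f j = 2 * (∑ i, f i)^2 := by
    rw [← h, Finset.mul_sum]
    exact Finset.sum_congr rfl fun i _ => by
      rw [Finset.mul_sum]
      exact Finset.sum_congr rfl fun j _ => by ring
  rw [h2, ← Finset.mul_sum]
  ring

lemma Ssym_transpose {m : ℕ} (A : Matrix (Fin m) (Fin m) ℝ) : (Ssym A)ᵀ = Ssym A := by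
  simp [Ssym, transpose_add, add_comm]

lemma trace_Ssym {m : ℕ} (A : Matrix (Fin m) (Fin m) ℝ) : (Ssym A).trace = A.trace := by
  simp [Ssym, trace_add, trace_transpose]
  ring

/-- arithmetic core of the forward direction -/
lemma arith_core (M s t c : ℝ) (hM : 1 ≤ M) (hs : 0 < s) (hc : 0 ≤ c)
    (hCS : t^2 ≤ M * s)
    (heq : (s + t^2)^2 = (M + 1) * (s * (s + t^2) + (1/4) * c)) :
    t^2 = M * s := by
  have hst : 0 < s + t^2 := by nlinarith [sq_nonneg t]
  have h7 : 0 ≤ (s + t^2) * (t^2 - M * s) := by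
    nlinarith [mul_nonneg (by linarith : (0:ℝ) ≤ M + 1) hc]
  nlinarith [mul_pos hst hst]

set_option maxHeartbeats 1600000 in
/-- For `A ∈ M_{n-1}(ℝ)` (size `m = n - 1`, ambient dimension `n = m + 1`)
with nonzero symmetric part, `F(A) = n` iff `S(A) = a I` for some nonzero `a ∈ ℝ`. -/
theorem stmt_4 (m : ℕ) (A : Matrix (Fin m) (Fin m) ℝ) (hS : Ssym A ≠ 0) :
    Fpinch A = (m + 1 : ℝ) ↔ ∃ a : ℝ, a ≠ 0 ∧ Ssym A = a • (1 : Matrix (Fin m) (Fin m) ℝ) := by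
  have hSt : (Ssym A)ᵀ = Ssym A := Ssym_transpose A
  set S := Ssym A with hSdef
  have hsum : (S * S).trace = ∑ i, ∑ j, (S i j)^2 := by
    rw [← trace_mul_transpose_eq_sum, hSt]
  have hm : 0 < m := by
    rcases Nat.eq_zero_or_pos m with h | h
    · exact absurd (by subst h; ext i j; exact i.elim0) hS
    · exact h
  have hm' : (1 : ℝ) ≤ m := by exact_mod_cast hm
  have hm0r : (0 : ℝ) < m := by linarith
  have hS0 : ∃ i j, S i j ≠ 0 := by
    by_contra h
    push_neg at h
    exact hS (by ext i j; exact h i j)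
  obtain ⟨i0, j0, hij0⟩ := hS0
  have hs0 : 0 < (S * S).trace := by
    rw [hsum]
    have h1 : (S i0 j0)^2 ≤ ∑ j, (S i0 j)^2 :=
      Finset.single_le_sum (f := fun j => (S i0 j)^2) (fun j _ => sq_nonneg _)
        (Finset.mem_univ _)
    have h2 : ∑ j, (S i0 j)^2 ≤ ∑ i, ∑ j, (S i j)^2 :=
      Finset.single_le_sum (f := fun i => ∑ j, (S i j)^2)
        (fun i _ => Finset.sum_nonneg fun j _ => sq_nonneg _) (Finset.mem_univ _)
    have h0 : 0 < (S i0 j0)^2 := by positivity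
    linarith
  have hc : 0 ≤ nsq (brk A Aᵀ) := by
    rw [nsq, trace_mul_transpose_eq_sum]
    positivity
  have ht : A.trace = ∑ i, S i i := by
    rw [← trace_Ssym A, ← hSdef, Matrix.trace]
    rfl
  have hdiag : ∑ i, (S i i)^2 ≤ (S * S).trace := by
    rw [hsum]
    exact Finset.sum_le_sum fun i _ =>
      Finset.single_le_sum (f := fun j => (S i j)^2) (fun j _ => sq_nonneg _)
        (Finset.mem_univ i)
  have hid := sum_sq_ident (fun i => S i i)
  have hidpos : (0:ℝ) ≤ ∑ i, ∑ j, (S i i - S j j)^2 := by positivity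
  have hCS : (∑ i, S i i)^2 ≤ m * ∑ i, (S i i)^2 := by linarith
  constructor
  · -- forward
    intro hF
    rw [Fpinch, ← hSdef] at hF
    have hden : 0 < (S * S).trace * ((S * S).trace + A.trace ^ 2)
        + (1/4) * nsq (brk A Aᵀ) := by
      nlinarith [sq_nonneg A.trace]
    have heq := (div_eq_iff (ne_of_gt hden)).mp hF
    have hCS' : A.trace ^ 2 ≤ (m:ℝ) * (S * S).trace := by
      rw [ht]
      calc (∑ i, S i i)^2 ≤ (m:ℝ) * ∑ i, (S i i)^2 := hCS
        _ ≤ (m:ℝ) * (S * S).trace := mul_le_mul_of_nonneg_left hdiag hm0r.le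
    have hd : A.trace ^ 2 = (m:ℝ) * (S * S).trace :=
      arith_core (m:ℝ) _ _ _ hm' hs0 hc hCS' heq
    -- equality in Cauchy–Schwarz and in the diagonal bound
    have e1 : (m:ℝ) * ∑ i, (S i i)^2 ≤ (m:ℝ) * (S * S).trace :=
      mul_le_mul_of_nonneg_left hdiag hm0r.le
    have e2 : (m:ℝ) * (S * S).trace ≤ (m:ℝ) * ∑ i, (S i i)^2 := by
      rw [← hd, ht]
      exact hCS
    have hdiag_eq : ∑ i, (S i i)^2 = (S * S).trace :=
      mul_left_cancel₀ (ne_of_gt hm0r) (le_antisymm e1 e2)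
    have hCSeq : (∑ i, S i i)^2 = (m:ℝ) * ∑ i, (S i i)^2 := by
      rw [hdiag_eq, ← ht]
      exact hd
    have hzero : ∑ i, ∑ j, (S i i - S j j)^2 = 0 := by linarith
    have hconst : ∀ i j, S i i = S j j := by
      intro i j
      have h1 : ∀ k ∈ Finset.univ, (0:ℝ) ≤ ∑ l, (S k k - S l l)^2 :=
        fun k _ => Finset.sum_nonneg fun l _ => sq_nonneg _
      have h2 := (Finset.sum_eq_zero_iff_of_nonneg h1).mp hzero i (Finset.mem_univ i)
      have h3 := (Finset.sum_eq_zero_iff_of_nonneg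
        (fun l _ => sq_nonneg (S i i - S l l))).mp h2 j (Finset.mem_univ j)
      have h4 := sq_eq_zero_iff.mp h3
      linarith [sub_eq_zero.mp h4]
    have hoff : ∀ i j, i ≠ j → S i j = 0 := by
      intro i j hij
      have h1 : ∑ k, (∑ l, (S k l)^2 - (S k k)^2) = 0 := by
        rw [Finset.sum_sub_distrib, ← hsum]
        linarith
      have h2 : ∀ k ∈ Finset.univ, (0:ℝ) ≤ ∑ l, (S k l)^2 - (S k k)^2 := by
        intro k _
        have hle : (S k k)^2 ≤ ∑ l, (S k l)^2 :=
          Finset.single_le_sum (f := fun l => (S k l)^2)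
            (fun l _ => sq_nonneg _) (Finset.mem_univ k)
        linarith
      have h3 := (Finset.sum_eq_zero_iff_of_nonneg h2).mp h1 i (Finset.mem_univ i)
      have h4 : (S i i)^2 + (S i j)^2 ≤ ∑ l, (S i l)^2 := by
        have hsub := Finset.sum_le_sum_of_subset_of_nonneg
          (Finset.subset_univ ({i, j} : Finset (Fin m)))
          (fun l _ _ => sq_nonneg (S i l))
        rwa [Finset.sum_pair hij] at hsub
      have h5 : (S i j)^2 = 0 := by nlinarith [sq_nonneg (S i j)]
      exact sq_eq_zero_iff.mp h5
    refine ⟨S ⟨0, hm⟩ ⟨0, hm⟩, ?_, ?_⟩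
    · intro ha
      apply hS
      ext i j
      by_cases hij : i = j
      · subst hij
        rw [hconst i ⟨0, hm⟩, ha]
        rfl
      · rw [hoff i j hij]
        rfl
    · ext i j
      by_cases hij : i = j
      · subst hij
        simp [Matrix.one_apply, hconst i ⟨0, hm⟩]
      · simp [Matrix.one_apply, hij, hoff i j hij]
  · -- reverse
    rintro ⟨a, ha, hSa⟩
    have hsumAT : A + Aᵀ = (2 * a) • (1 : Matrix (Fin m) (Fin m) ℝ) := by
      have h2 : (2:ℝ) • S = A + Aᵀ := by
        rw [hSdef, Ssym, smul_smul]
        norm_num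
      rw [← h2, hSa, smul_smul]
    have hAT : Aᵀ = (2 * a) • (1 : Matrix (Fin m) (Fin m) ℝ) - A := by
      rw [← hsumAT]
      abel
    have hbrk : brk A Aᵀ = 0 := by
      rw [brk, hAT]
      simp [mul_sub, sub_mul, Matrix.mul_smul, Matrix.smul_mul, mul_one, one_mul]
    have hnsq0 : nsq (brk A Aᵀ) = 0 := by
      rw [hbrk, nsq]
      simp
    have htrS : (S * S).trace = (m:ℝ) * a^2 := by
      rw [hSa, smul_mul_smul_comm, one_mul, trace_smul, trace_one]
      simp [Fintype.card_fin]
      ring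
    have htrA : A.trace = (m:ℝ) * a := by
      rw [← trace_Ssym A, ← hSdef, hSa, trace_smul, trace_one]
      simp [Fintype.card_fin]
      ring
    rw [Fpinch, ← hSdef, hnsq0, htrS, htrA]
    have hma : (0:ℝ) < (m:ℝ) * a^2 := by positivity
    have hden : (0:ℝ) < (m:ℝ) * a^2 * ((m:ℝ) * a^2 + ((m:ℝ) * a)^2) + 1/4 * 0 := by
      nlinarith [sq_nonneg ((m:ℝ) * a)]
    rw [div_eq_iff (ne_of_gt hden)]
    ring
end

section
/- The gradient of F : M_{n-1}(ℝ)∖{S(A)=0} → ℝ vanishes at A if and only if either S(A) = cI with c ≠ 0, or [A,Aᵀ] = 0 and tr A = 0. -/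
/-!
Along a line `t ↦ A + tB`, the three scalars `tr S(A)²`, `tr A` and `|[A,Aᵀ]|²` have derivatives
`2⟨S(A),B⟩`, `tr B` and `-4⟨[A,[A,Aᵀ]],B⟩` for the Frobenius pairing `⟨X,Y⟩ = tr (X Yᵀ)`; this
gives the gradient formula `grad F = c₄⁻² (c₁ I + c₂ S(A) + c₃ [A,[A,Aᵀ]])`.

If the gradient vanishes, `[A,[A,Aᵀ]]` is symmetric, which forces `S(A)` to commute with `[A,Aᵀ]`.
Then `[A,[A,Aᵀ]]` is orthogonal to both `I` and `S(A)`, and pairing the gradient with `I` and `S(A)`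
gives a linear system for `(c₁, c₂)` with determinant `m tr S(A)² - (tr S(A))² ≥ 0`. A vanishing
determinant is the equality case of Cauchy–Schwarz, `S(A) = cI`; otherwise `c₁ = c₂ = 0`, which
forces `tr A = 0` and then `[A,Aᵀ] = 0`.
-/

open Matrix

attribute [local instance] Matrix.normedAddCommGroup Matrix.normedSpace

section MatrixCurves

variable {l n p : Type*} [Fintype n] {t : ℝ}

theorem hasDerivAt_matrix_iff {X : ℝ → Matrix l n ℝ} {X' : Matrix l n ℝ} :
    HasDerivAt X X' t ↔ ∀ i j, HasDerivAt (fun s => X s i j) (X' i j) t :=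
  hasDerivAt_pi.trans <| forall_congr' fun _ => hasDerivAt_pi

theorem HasDerivAt.matrix_mul [Fintype p] {X : ℝ → Matrix l n ℝ} {Y : ℝ → Matrix n p ℝ}
    {X' : Matrix l n ℝ} {Y' : Matrix n p ℝ} (hX : HasDerivAt X X' t) (hY : HasDerivAt Y Y' t) :
    HasDerivAt (fun s => X s * Y s) (X' * Y t + X t * Y') t := by
  refine hasDerivAt_matrix_iff.2 fun i k => ?_
  simp only [mul_apply, Matrix.add_apply, ← Finset.sum_add_distrib]
  exact HasDerivAt.fun_sum fun j _ =>
    (hasDerivAt_matrix_iff.1 hX i j).mul (hasDerivAt_matrix_iff.1 hY j k)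

theorem HasDerivAt.matrix_transpose [Fintype l] {X : ℝ → Matrix l n ℝ} {X' : Matrix l n ℝ}
    (hX : HasDerivAt X X' t) : HasDerivAt (fun s => (X s)ᵀ) X'ᵀ t :=
  hasDerivAt_matrix_iff.2 fun i j => hasDerivAt_matrix_iff.1 hX j i

theorem HasDerivAt.matrix_trace {X : ℝ → Matrix n n ℝ} {X' : Matrix n n ℝ}
    (hX : HasDerivAt X X' t) : HasDerivAt (fun s => (X s).trace) X'.trace t :=
  HasDerivAt.fun_sum fun i _ => hasDerivAt_matrix_iff.1 hX i i

end MatrixCurves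

namespace Matrix.IsSymm

variable {n : Type*} [Fintype n]

theorem trace_mul_transpose {C : Matrix n n ℝ} (hC : C.IsSymm) (M : Matrix n n ℝ) :
    (C * Mᵀ).trace = (C * M).trace := by
  rw [← trace_transpose, transpose_mul, transpose_transpose, hC.eq, trace_mul_comm]

theorem eq_smul_one_of_card_mul_trace_mul_self [DecidableEq n] {X : Matrix n n ℝ}
    (hX : X.IsSymm) (h : Fintype.card n * (X * X).trace = X.trace ^ 2) :
    X = (X.trace / Fintype.card n) • (1 : Matrix n n ℝ) := by
  rcases isEmpty_or_nonempty n with hn | hn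
  · exact Subsingleton.elim _ _
  have hcard : (Fintype.card n : ℝ) ≠ 0 := Nat.cast_ne_zero.2 Fintype.card_ne_zero
  set Y := (Fintype.card n : ℝ) • X - X.trace • (1 : Matrix n n ℝ)
  have hY : (Y * Yᴴ).trace = 0 := by
    have hYt : Yᴴ = Y := by
      simp [Y, conjTranspose_eq_transpose_of_trivial, transpose_sub, hX.eq]
    rw [hYt]
    simp only [Y, sub_mul, mul_sub, smul_mul_smul_comm, mul_smul, one_mul, mul_one,
      trace_sub, trace_smul, trace_one, smul_eq_mul]
    linear_combination (Fintype.card n : ℝ) * h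
  have hY0 : (Fintype.card n : ℝ) • X = X.trace • (1 : Matrix n n ℝ) :=
    sub_eq_zero.1 (trace_mul_conjTranspose_self_eq_zero_iff.1 hY)
  rw [div_eq_inv_mul, ← smul_smul, ← hY0, smul_smul, inv_mul_cancel₀ hcard, one_smul]

end Matrix.IsSymm

section SymmetricPartAndCommutator

variable {m : ℕ} (X Y Z : Matrix (Fin m) (Fin m) ℝ)

theorem transpose_brk : (brk X Y)ᵀ = brk Yᵀ Xᵀ := by
  simp only [brk, transpose_sub, transpose_mul]

theorem trace_brk : (brk X Y).trace = 0 := by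
  rw [brk, trace_sub, trace_mul_comm, sub_self]

theorem trace_brk_mul : (brk X Y * Z).trace = (X * brk Y Z).trace := by
  simp only [brk, sub_mul, mul_sub, trace_sub, Matrix.mul_assoc]
  rw [trace_mul_comm Y (X * Z), Matrix.mul_assoc]

theorem brk_transpose_isSymm : (brk X Xᵀ).IsSymm := by
  rw [IsSymm, transpose_brk, transpose_transpose]

theorem Ssym_isSymm : (Ssym X).IsSymm := by
  simp only [IsSymm, Ssym, transpose_smul, transpose_add, transpose_transpose, add_comm]

theorem trace_Ssym_s11 : (Ssym X).trace = X.trace := by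
  rw [Ssym, trace_smul, trace_add, trace_transpose, smul_eq_mul]
  ring

theorem nsq_nonneg : 0 ≤ nsq X := by
  simpa [nsq, conjTranspose_eq_transpose_of_trivial] using
    (posSemidef_self_mul_conjTranspose X).trace_nonneg

theorem nsq_eq_zero_iff {X : Matrix (Fin m) (Fin m) ℝ} : nsq X = 0 ↔ X = 0 := by
  simpa [nsq, conjTranspose_eq_transpose_of_trivial] using
    trace_mul_conjTranspose_self_eq_zero_iff (A := X)

theorem trace_Ssym_mul_self_pos {X : Matrix (Fin m) (Fin m) ℝ} (hX : Ssym X ≠ 0) :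
    0 < (Ssym X * Ssym X).trace := by
  have h : (Ssym X * Ssym X).trace = nsq (Ssym X) := by
    rw [nsq, (Ssym_isSymm X).eq]
  exact h ▸ (nsq_nonneg _).lt_of_ne' (mt nsq_eq_zero_iff.1 hX)

theorem Matrix.IsSymm.trace_mul_Ssym {C : Matrix (Fin m) (Fin m) ℝ} (hC : C.IsSymm) :
    (C * Ssym X).trace = (C * Xᵀ).trace := by
  rw [Ssym, Matrix.mul_smul, trace_smul, Matrix.mul_add, trace_add, hC.trace_mul_transpose,
    smul_eq_mul]
  ring

theorem Matrix.IsSymm.trace_mul_brk {C : Matrix (Fin m) (Fin m) ℝ} (hC : C.IsSymm) :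
    (C * (brk Y Xᵀ + brk X Yᵀ)ᵀ).trace = -2 * (brk X C * Yᵀ).trace := by
  have hpair : (C * brk X Yᵀ).trace = -(brk X C * Yᵀ).trace := by
    simp only [brk, mul_sub, sub_mul, trace_sub, Matrix.mul_assoc]
    rw [trace_mul_comm C (Yᵀ * X), Matrix.mul_assoc, ← Matrix.mul_assoc X C Yᵀ,
      trace_mul_comm (X * C) Yᵀ]
    ring
  rw [hC.trace_mul_transpose, Matrix.mul_add, trace_add, ← hC.trace_mul_transpose (brk Y Xᵀ),
    transpose_brk, transpose_transpose, hpair]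
  ring

end SymmetricPartAndCommutator

section CurveDerivatives

variable {m : ℕ} {X : ℝ → Matrix (Fin m) (Fin m) ℝ} {X' : Matrix (Fin m) (Fin m) ℝ} {t : ℝ}

theorem HasDerivAt.ssym (hX : HasDerivAt X X' t) :
    HasDerivAt (fun s => Ssym (X s)) (Ssym X') t :=
  (hX.add hX.matrix_transpose).const_smul (1 / 2 : ℝ)

theorem HasDerivAt.trace_Ssym_mul_self (hX : HasDerivAt X X' t) :
    HasDerivAt (fun s => (Ssym (X s) * Ssym (X s)).trace) (2 * (Ssym (X t) * X'ᵀ).trace) t := by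
  refine (hX.ssym.matrix_mul hX.ssym).matrix_trace.congr_deriv ?_
  rw [trace_add, trace_mul_comm (Ssym X'), (Ssym_isSymm (X t)).trace_mul_Ssym]
  ring

theorem HasDerivAt.trace_mul_transpose_self (hX : HasDerivAt X X' t) :
    HasDerivAt (fun s => (X s * (X s)ᵀ).trace) (2 * (X t * X'ᵀ).trace) t := by
  refine (hX.matrix_mul hX.matrix_transpose).matrix_trace.congr_deriv ?_
  rw [trace_add, ← trace_transpose (X' * (X t)ᵀ), transpose_mul, transpose_transpose]
  ring

theorem HasDerivAt.brk_transpose (hX : HasDerivAt X X' t) :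
    HasDerivAt (fun s => brk (X s) (X s)ᵀ) (brk X' (X t)ᵀ + brk (X t) X'ᵀ) t := by
  refine ((hX.matrix_mul hX.matrix_transpose).sub
    (hX.matrix_transpose.matrix_mul hX)).congr_deriv ?_
  simp only [brk]
  abel

theorem HasDerivAt.nsq_brk_transpose (hX : HasDerivAt X X' t) :
    HasDerivAt (fun s => nsq (brk (X s) (X s)ᵀ))
      (-4 * (brk (X t) (brk (X t) (X t)ᵀ) * X'ᵀ).trace) t := by
  refine hX.brk_transpose.trace_mul_transpose_self.congr_deriv ?_
  rw [(brk_transpose_isSymm (X t)).trace_mul_brk]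
  ring

end CurveDerivatives

section Algebra

variable {m : ℕ} {A C : Matrix (Fin m) (Fin m) ℝ}

theorem brk_Ssym_eq_zero_of_isSymm (hC : C.IsSymm) (h : (brk A C).IsSymm) :
    brk (Ssym A) C = 0 := by
  have h' : brk C Aᵀ = brk A C := by rw [← h.eq, transpose_brk, hC.eq]
  have hsum : brk (A + Aᵀ) C = -(brk C Aᵀ - brk A C) := by simp only [brk]; noncomm_ring
  have hS : brk (Ssym A) C = (1 / 2 : ℝ) • brk (A + Aᵀ) C := by
    simp only [Ssym, brk, Matrix.smul_mul, Matrix.mul_smul, smul_sub]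
  rw [hS, hsum, h', sub_self, neg_zero, smul_zero]

theorem brk_transpose_eq_zero_of_Ssym_eq_smul_one {c : ℝ} (h : Ssym A = c • 1) :
    brk A Aᵀ = 0 := by
  have hT : Aᵀ = (2 * c) • 1 - A := by
    refine eq_sub_of_add_eq' ?_
    rw [← smul_smul, ← h, Ssym, smul_smul]
    norm_num
  rw [brk, hT, Matrix.mul_sub, Matrix.sub_mul, Matrix.mul_smul, Matrix.smul_mul, Matrix.mul_one,
    Matrix.one_mul, sub_self]

theorem trace_relations_of_smul_add_smul_add_smul_eq_zero {a b c : ℝ} (hc : c ≠ 0)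
    (h : a • (1 : Matrix (Fin m) (Fin m) ℝ) + b • Ssym A + c • brk A (brk A Aᵀ) = 0) :
    a * m + b * A.trace = 0 ∧ a * A.trace + b * (Ssym A * Ssym A).trace = 0 := by
  have hbrk : brk A (brk A Aᵀ) = (-c⁻¹) • (a • 1 + b • Ssym A) := by
    rw [neg_smul, ← smul_neg, ← eq_neg_of_add_eq_zero_right h, smul_smul, inv_mul_cancel₀ hc,
      one_smul]
  have hsymm : (brk A (brk A Aᵀ)).IsSymm := by
    rw [hbrk, IsSymm, transpose_smul, transpose_add, transpose_smul, transpose_smul,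
      transpose_one, (Ssym_isSymm A).eq]
  have hcomm : brk (brk A Aᵀ) (Ssym A) = 0 := by
    rw [brk, ← neg_sub, ← brk, brk_Ssym_eq_zero_of_isSymm (brk_transpose_isSymm A) hsymm,
      neg_zero]
  constructor
  · simpa [trace_add, trace_smul, trace_one, trace_Ssym_s11, trace_brk] using congrArg trace h
  · simpa [Matrix.add_mul, trace_add, trace_smul, trace_Ssym_s11, trace_brk_mul, hcomm] using
      congrArg (fun X => (X * Ssym A).trace) h

end Algebra

namespace Fpinch

variable {m : ℕ} (A : Matrix (Fin m) (Fin m) ℝ)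

noncomputable def c₁ : ℝ :=
  A.trace * ((Ssym A * Ssym A).trace + A.trace ^ 2) *
    (2 * (Ssym A * Ssym A).trace * ((Ssym A * Ssym A).trace + A.trace ^ 2) + nsq (brk A Aᵀ))

noncomputable def c₂ : ℝ :=
  ((Ssym A * Ssym A).trace + A.trace ^ 2) *
    (-2 * A.trace ^ 2 * ((Ssym A * Ssym A).trace + A.trace ^ 2) + nsq (brk A Aᵀ))

noncomputable def c₃ : ℝ := ((Ssym A * Ssym A).trace + A.trace ^ 2) ^ 2

noncomputable def c₄ : ℝ :=
  (Ssym A * Ssym A).trace * ((Ssym A * Ssym A).trace + A.trace ^ 2) + (1 / 4) * nsq (brk A Aᵀ)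

noncomputable def grad : Matrix (Fin m) (Fin m) ℝ :=
  (c₄ A ^ 2)⁻¹ • (c₁ A • 1 + c₂ A • Ssym A + c₃ A • brk A (brk A Aᵀ))

variable {A}

theorem c₃_pos (hA : Ssym A ≠ 0) : 0 < c₃ A := by
  have := trace_Ssym_mul_self_pos hA
  unfold c₃
  positivity

theorem c₄_pos (hA : Ssym A ≠ 0) : 0 < c₄ A := by
  have := trace_Ssym_mul_self_pos hA
  have := nsq_nonneg (brk A Aᵀ)
  unfold c₄
  positivity

theorem _root_.HasDerivAt.fpinch {X : ℝ → Matrix (Fin m) (Fin m) ℝ}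
    {X' : Matrix (Fin m) (Fin m) ℝ} {t : ℝ} (hX : HasDerivAt X X' t) (hS : Ssym (X t) ≠ 0) :
    HasDerivAt (fun s => Fpinch (X s)) (grad (X t) * X'ᵀ).trace t := by
  have hD := (c₄_pos hS).ne'
  have hs := hX.trace_Ssym_mul_self
  have hN := hs.fun_add (hX.matrix_trace.fun_pow 2)
  have hq := hX.nsq_brk_transpose
  refine ((hN.fun_pow 2).fun_div ((hs.fun_mul hN).fun_add (hq.const_mul (1 / 4))) hD).congr_deriv ?_
  simp only [grad, c₁, c₂, c₃, c₄] at hD ⊢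
  simp only [smul_mul, Matrix.add_mul, one_mul, trace_smul, trace_add, trace_transpose, smul_eq_mul]
  field_simp
  ring

theorem differentiableAt (hA : Ssym A ≠ 0) : DifferentiableAt ℝ Fpinch A := by
  have hs : Differentiable ℝ fun X : Matrix (Fin m) (Fin m) ℝ => (Ssym X * Ssym X).trace := by
    simp only [Ssym, trace, diag, mul_apply, Matrix.smul_apply, Matrix.add_apply, transpose_apply]
    fun_prop
  have hτ : Differentiable ℝ fun X : Matrix (Fin m) (Fin m) ℝ => X.trace := by
    simp only [trace, diag]
    fun_prop
  have hq : Differentiable ℝ fun X : Matrix (Fin m) (Fin m) ℝ => nsq (brk X Xᵀ) := by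
    simp only [nsq, brk, trace, diag, mul_apply, Matrix.sub_apply, transpose_apply]
    fun_prop
  unfold Fpinch
  fun_prop (disch := exact (c₄_pos hA).ne')

theorem fderiv_apply (hA : Ssym A ≠ 0) (B : Matrix (Fin m) (Fin m) ℝ) :
    fderiv ℝ Fpinch A B = (grad A * Bᵀ).trace := by
  have hline : HasDerivAt (fun t : ℝ => A + t • B) B 0 :=
    (((hasDerivAt_id (0 : ℝ)).smul_const B).const_add A).congr_deriv (one_smul ℝ B)
  have h := (hline.fpinch (by simpa using hA)).deriv
  rw [zero_smul, add_zero] at h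
  exact (differentiableAt hA).lineDeriv_eq_fderiv.symm.trans h

theorem fderiv_eq_zero_iff (hA : Ssym A ≠ 0) : fderiv ℝ Fpinch A = 0 ↔ grad A = 0 := by
  refine ⟨fun h => ?_, fun h => ContinuousLinearMap.ext fun B => by simp [fderiv_apply hA, h]⟩
  exact nsq_eq_zero_iff.1 (by rw [nsq, ← fderiv_apply hA, h]; rfl)

theorem grad_eq_zero_of_Ssym_eq_smul_one {c : ℝ} (h : Ssym A = c • 1) : grad A = 0 := by
  have hC := brk_transpose_eq_zero_of_Ssym_eq_smul_one h
  have hτ : A.trace = c * m := by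
    rw [← trace_Ssym_s11, h, trace_smul, trace_one, Fintype.card_fin, smul_eq_mul]
  have ht : (Ssym A * Ssym A).trace = c ^ 2 * m := by
    rw [h, smul_mul_smul_comm, Matrix.one_mul, trace_smul, trace_one, Fintype.card_fin,
      smul_eq_mul, sq]
  have hcoef : c₁ A + c₂ A * c = 0 := by
    simp only [c₁, c₂, hC, hτ, ht, nsq, Matrix.zero_mul, trace_zero]
    ring
  rw [grad, h, hC, brk, Matrix.mul_zero, Matrix.zero_mul, sub_zero, smul_zero, add_zero,
    smul_smul, ← add_smul, hcoef, zero_smul, smul_zero]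

theorem grad_eq_zero_of_brk_transpose_eq_zero (hC : brk A Aᵀ = 0) (hτ : A.trace = 0) :
    grad A = 0 := by
  have h₁ : c₁ A = 0 := by simp only [c₁, hτ, zero_mul]
  have h₂ : c₂ A = 0 := by simp only [c₂, hτ, hC, nsq, Matrix.zero_mul, trace_zero]; ring
  rw [grad, h₁, h₂, hC, brk, Matrix.mul_zero, Matrix.zero_mul, sub_zero, zero_smul, zero_smul,
    smul_zero, add_zero, add_zero, smul_zero]

theorem brk_transpose_and_trace_eq_zero_of_c₁_c₂_eq_zero (hA : Ssym A ≠ 0) (h₁ : c₁ A = 0)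
    (h₂ : c₂ A = 0) : brk A Aᵀ = 0 ∧ A.trace = 0 := by
  have ht := trace_Ssym_mul_self_pos hA
  have hq := nsq_nonneg (brk A Aᵀ)
  have hτ : A.trace = 0 := by
    have hpos : 0 < ((Ssym A * Ssym A).trace + A.trace ^ 2) *
        (2 * (Ssym A * Ssym A).trace * ((Ssym A * Ssym A).trace + A.trace ^ 2) +
          nsq (brk A Aᵀ)) := by positivity
    rw [c₁, mul_assoc] at h₁
    exact (mul_eq_zero.1 h₁).resolve_right hpos.ne'
  refine ⟨nsq_eq_zero_iff.1 ?_, hτ⟩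
  simpa [c₂, hτ, ht.ne'] using h₂

theorem grad_eq_zero_iff (hA : Ssym A ≠ 0) :
    grad A = 0 ↔ (∃ c : ℝ, c ≠ 0 ∧ Ssym A = c • (1 : Matrix (Fin m) (Fin m) ℝ)) ∨
      (A * Aᵀ = Aᵀ * A ∧ A.trace = 0) := by
  refine ⟨fun h => ?_, ?_⟩
  · rw [grad, smul_eq_zero, or_iff_right (inv_ne_zero (pow_ne_zero 2 (c₄_pos hA).ne'))] at h
    obtain ⟨h₁, h₂⟩ := trace_relations_of_smul_add_smul_add_smul_eq_zero (c₃_pos hA).ne' h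
    by_cases hdet : m * (Ssym A * Ssym A).trace = A.trace ^ 2
    · have hS := (Ssym_isSymm A).eq_smul_one_of_card_mul_trace_mul_self
        (by rwa [Fintype.card_fin, trace_Ssym_s11])
      exact Or.inl ⟨_, fun hc => hA (by rw [hS, hc, zero_smul]), hS⟩
    · have hdet' : (m : ℝ) * (Ssym A * Ssym A).trace - A.trace ^ 2 ≠ 0 := sub_ne_zero.2 hdet
      have hc₁ : c₁ A = 0 := by
        refine (mul_eq_zero.1 (?_ : c₁ A * _ = 0)).resolve_right hdet'
        linear_combination (Ssym A * Ssym A).trace * h₁ - A.trace * h₂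
      have hc₂ : c₂ A = 0 := by
        refine (mul_eq_zero.1 (?_ : c₂ A * _ = 0)).resolve_right hdet'
        linear_combination (m : ℝ) * h₂ - A.trace * h₁
      obtain ⟨hC, hτ⟩ := brk_transpose_and_trace_eq_zero_of_c₁_c₂_eq_zero hA hc₁ hc₂
      exact Or.inr ⟨sub_eq_zero.1 hC, hτ⟩
  · rintro (⟨c, -, hc⟩ | ⟨hC, hτ⟩)
    · exact grad_eq_zero_of_Ssym_eq_smul_one hc
    · exact grad_eq_zero_of_brk_transpose_eq_zero (sub_eq_zero.2 hC) hτ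

end Fpinch

/-- The gradient (total derivative) of `F` vanishes at a point `A` with
`S(A) ≠ 0` iff either `S(A) = cI` with `c ≠ 0`, or `A` is normal and traceless. -/
theorem stmt_11 (m : ℕ) (A : Matrix (Fin m) (Fin m) ℝ) (hS : Ssym A ≠ 0) :
    fderiv ℝ Fpinch A = 0 ↔
      ((∃ c : ℝ, c ≠ 0 ∧ Ssym A = c • (1 : Matrix (Fin m) (Fin m) ℝ)) ∨
        (A * Aᵀ = Aᵀ * A ∧ A.trace = 0)) := by
  rw [Fpinch.fderiv_eq_zero_iff hS, Fpinch.grad_eq_zero_iff hS]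
end

section
/- Let N ∈ M_{n-1}(ℝ) be a nilsoliton (nilpotent with [N,[N,Nᵀ]] = cN for some c ∈ ℝ) and C a nonzero skew-symmetric matrix with [N,C] = 0. Then A = N + C satisfies the criticality equation c₂(A)[A,Aᵀ] = 2c₃(A)[Aᵀ,[A,[A,Aᵀ]]], and F(A) = F(N). -/
open Matrix

/-- Coefficient `c₂(A) = (tr S(A)²+(tr A)²)(−2(tr A)²(tr S(A)²+(tr A)²)+|[A,Aᵀ]|²)`. -/
noncomputable def c2 {m : ℕ} (A : Matrix (Fin m) (Fin m) ℝ) : ℝ :=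
  ((Ssym A * Ssym A).trace + A.trace ^ 2) *
    (-2 * A.trace ^ 2 * ((Ssym A * Ssym A).trace + A.trace ^ 2) + nsq (brk A Aᵀ))

/-- Coefficient `c₃(A) = (tr S(A)²+(tr A)²)²`. -/
noncomputable def c3 {m : ℕ} (A : Matrix (Fin m) (Fin m) ℝ) : ℝ :=
  ((Ssym A * Ssym A).trace + A.trace ^ 2) ^ 2

/-!
Since `C` is skew and commutes with `N`, it also commutes with `Nᵀ`, hence with every bracket
built from `N` and `Nᵀ`. Adding `C` therefore changes neither `S`, nor the trace, nor `[A,Aᵀ]`,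
nor `[Aᵀ,[A,[A,Aᵀ]]]`; as `c₂`, `c₃` and `F` only see `S(A)`, `tr A` and `[A,Aᵀ]`, everything
reduces to `N` itself. For the nilsoliton `N`, nilpotency gives `tr N = tr N² = 0`, so
`tr S(N)² = ½ tr NNᵀ`, and pairing the soliton equation with `Nᵀ` gives
`|[N,Nᵀ]|² = -c · tr NNᵀ`, which is exactly the scalar identity behind the criticality equation.
-/

variable {m : ℕ}

lemma trace_eq_zero_of_transpose_eq_neg {C : Matrix (Fin m) (Fin m) ℝ} (hskew : Cᵀ = -C) :
    C.trace = 0 := by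
  have h := congrArg Matrix.trace hskew
  rw [trace_transpose, trace_neg] at h
  linarith

lemma commute_transpose_of_transpose_eq_neg {N C : Matrix (Fin m) (Fin m) ℝ}
    (hskew : Cᵀ = -C) (hcomm : Commute N C) : Commute Nᵀ C := by
  have h := congrArg Matrix.transpose hcomm.eq
  rw [transpose_mul, transpose_mul, hskew, Matrix.neg_mul, Matrix.mul_neg, neg_inj] at h
  exact h.symm

lemma commute_brk {X Y C : Matrix (Fin m) (Fin m) ℝ} (hX : Commute C X) (hY : Commute C Y) :
    Commute C (brk X Y) :=
  (hX.mul_right hY).sub_right (hY.mul_right hX)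

lemma brk_add_left {X Y C : Matrix (Fin m) (Fin m) ℝ} (h : Commute C Y) :
    brk (X + C) Y = brk X Y := by
  simp only [brk, Matrix.add_mul, Matrix.mul_add, h.eq]
  abel

lemma brk_add_right {X Y C : Matrix (Fin m) (Fin m) ℝ} (h : Commute C X) :
    brk X (Y + C) = brk X Y := by
  simp only [brk, Matrix.add_mul, Matrix.mul_add, h.eq]
  abel

lemma Ssym_add_of_transpose_eq_neg (N : Matrix (Fin m) (Fin m) ℝ)
    {C : Matrix (Fin m) (Fin m) ℝ} (hskew : Cᵀ = -C) : Ssym (N + C) = Ssym N := by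
  rw [Ssym, Ssym, transpose_add, hskew]
  abel_nf

lemma trace_Ssym_mul_self (N : Matrix (Fin m) (Fin m) ℝ) :
    (Ssym N * Ssym N).trace = ((N * N).trace + (N * Nᵀ).trace) / 2 := by
  have hTT : (Nᵀ * Nᵀ).trace = (N * N).trace := by rw [← transpose_mul, trace_transpose]
  have hTN : (Nᵀ * N).trace = (N * Nᵀ).trace := trace_mul_comm _ _
  simp only [Ssym, Matrix.smul_mul, Matrix.mul_smul, trace_smul, Matrix.add_mul, Matrix.mul_add,
    trace_add, hTT, hTN, smul_eq_mul]
  ring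

lemma nsq_brk_self_transpose (N : Matrix (Fin m) (Fin m) ℝ) :
    nsq (brk N Nᵀ) = -(brk N (brk N Nᵀ) * Nᵀ).trace := by
  set B := brk N Nᵀ with hB
  have hBT : Bᵀ = B := by
    rw [hB, brk, transpose_sub, transpose_mul, transpose_mul, transpose_transpose]
  have hcyc : (N * (B * Nᵀ)).trace = (B * (Nᵀ * N)).trace := by
    rw [trace_mul_comm, Matrix.mul_assoc]
  rw [nsq, hBT]
  nth_rewrite 2 [hB]
  simp only [brk, Matrix.mul_sub, Matrix.sub_mul, trace_sub, Matrix.mul_assoc]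
  rw [hcyc]
  ring

lemma brk_transpose_brk_brk_of_soliton {N : Matrix (Fin m) (Fin m) ℝ} {c : ℝ}
    (hsol : brk N (brk N Nᵀ) = c • N) : brk Nᵀ (brk N (brk N Nᵀ)) = -c • brk N Nᵀ := by
  rw [hsol, brk, brk, Matrix.mul_smul, Matrix.smul_mul, ← smul_sub, neg_smul, ← smul_neg,
    neg_sub]

section Nilsoliton

variable {N : Matrix (Fin m) (Fin m) ℝ} {c : ℝ} (hN : IsNilpotent N)
  (hsol : brk N (brk N Nᵀ) = c • N)

include hN

lemma trace_Ssym_mul_self_of_isNilpotent :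
    (Ssym N * Ssym N).trace = (N * Nᵀ).trace / 2 := by
  rw [trace_Ssym_mul_self,
    (isNilpotent_trace_of_isNilpotent ((Commute.refl N).isNilpotent_mul_left hN)).eq_zero,
    zero_add]

include hsol

lemma c2_eq_of_nilsoliton : c2 N = -(2 * c3 N) * c := by
  have hnsq : nsq (brk N Nᵀ) = -(c * (N * Nᵀ).trace) := by
    rw [nsq_brk_self_transpose, hsol, Matrix.smul_mul, trace_smul, smul_eq_mul]
  rw [c2, c3, trace_Ssym_mul_self_of_isNilpotent hN, (isNilpotent_trace_of_isNilpotent hN).eq_zero,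
    hnsq]
  ring

lemma nilsoliton_critical :
    c2 N • brk N Nᵀ = (2 * c3 N) • brk Nᵀ (brk N (brk N Nᵀ)) := by
  rw [c2_eq_of_nilsoliton hN hsol, brk_transpose_brk_brk_of_soliton hsol, smul_smul]
  ring_nf

end Nilsoliton

section Congr

variable {A B : Matrix (Fin m) (Fin m) ℝ} (hS : Ssym A = Ssym B) (htr : A.trace = B.trace)
  (hbrk : brk A Aᵀ = brk B Bᵀ)
include hS htr

lemma c3_congr : c3 A = c3 B := by
  rw [c3, c3, hS, htr]

include hbrk

lemma c2_congr : c2 A = c2 B := by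
  rw [c2, c2, hS, htr, hbrk]

lemma Fpinch_congr : Fpinch A = Fpinch B := by
  rw [Fpinch, Fpinch, hS, htr, hbrk]

end Congr

section AddSkew

variable {N C : Matrix (Fin m) (Fin m) ℝ} (hskew : Cᵀ = -C) (hcomm : Commute N C)
include hskew hcomm

lemma brk_self_transpose_add_skew : brk (N + C) (N + C)ᵀ = brk N Nᵀ := by
  have hT := commute_transpose_of_transpose_eq_neg hskew hcomm
  rw [transpose_add, hskew, brk_add_left (hT.symm.add_right (Commute.refl C).neg_right),
    brk_add_right hcomm.symm.neg_left]

lemma brk_transpose_brk_brk_add_skew :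
    brk (N + C)ᵀ (brk (N + C) (brk (N + C) (N + C)ᵀ)) = brk Nᵀ (brk N (brk N Nᵀ)) := by
  have hT := commute_transpose_of_transpose_eq_neg hskew hcomm
  have hB := commute_brk hcomm.symm hT.symm
  rw [brk_self_transpose_add_skew hskew hcomm, brk_add_left hB, transpose_add, hskew,
    brk_add_left (commute_brk hcomm.symm hB).neg_left]

end AddSkew

theorem stmt_14_general (m : ℕ) (N C : Matrix (Fin m) (Fin m) ℝ)
    (hN : IsNilpotent N) (c : ℝ) (hsol : brk N (brk N Nᵀ) = c • N)
    (hskew : Cᵀ = -C) (hcomm : N * C = C * N) :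
    c2 (N + C) • brk (N + C) (N + C)ᵀ =
        (2 * c3 (N + C)) • brk (N + C)ᵀ (brk (N + C) (brk (N + C) (N + C)ᵀ)) ∧
    Fpinch (N + C) = Fpinch N := by
  have hS := Ssym_add_of_transpose_eq_neg N hskew
  have htr : (N + C).trace = N.trace := by
    rw [trace_add, trace_eq_zero_of_transpose_eq_neg hskew, add_zero]
  have hB := brk_self_transpose_add_skew hskew hcomm
  refine ⟨?_, Fpinch_congr hS htr hB⟩
  rw [c2_congr hS htr hB, c3_congr hS htr, brk_transpose_brk_brk_add_skew hskew hcomm, hB]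
  exact nilsoliton_critical hN hsol

/-- Let `N` be a nilsoliton (nilpotent with `[N,[N,Nᵀ]] = cN`) and `C` a
nonzero skew-symmetric matrix commuting with `N`. Then `A = N + C` satisfies the criticality
equation `c₂(A)[A,Aᵀ] = 2c₃(A)[Aᵀ,[A,[A,Aᵀ]]]`, and `F(A) = F(N)`. -/
theorem stmt_14 (m : ℕ) (N C : Matrix (Fin m) (Fin m) ℝ)
    (hN : IsNilpotent N) (c : ℝ) (hsol : brk N (brk N Nᵀ) = c • N)
    (hC : C ≠ 0) (hskew : Cᵀ = -C) (hcomm : N * C = C * N) :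
    c2 (N + C) • brk (N + C) (N + C)ᵀ =
        (2 * c3 (N + C)) • brk (N + C)ᵀ (brk (N + C) (brk (N + C) (N + C)ᵀ)) ∧
    Fpinch (N + C) = Fpinch N :=
  stmt_14_general m N C hN c hsol hskew hcomm
end
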